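/- arXiv:1801.08832 — 2 statements merged into one kernel-verified Lean document; each statement's English description precedes it below -/
import Mathlib

section
/- With the two-level dynamics as above, fix σ₁ ∈ V_{N1} and let C = C(σ₁) = {σ : first coordinate equals σ₁} be the cylinder over σ₁. For disjoint A, B ⊆ C and σ ∈ C, setting u = log(1−q(σ₁)), the probability P_σ(τ_A ≤ τ_{B ∪ ∂C}) of hitting A no later than B ∪ ∂C equals the Laplace-transform expression E°_{σ₂}[e^{u·τ_{π₂A}} 1{τ_{π₂A} < τ_{π₂B}}] for the simple random walk on V_{N2} started at σ₂ (and equals E°_{σ₂}[e^{u·τ_{π₂A}}] when B = ∅). Here the key fact is that the exit time of the cylinder C is a geometric random variable with success probability q(σ₁), independent of the second-coordinate motion. -/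
open scoped BigOperators Classical

/-- Simple random walk transition matrix on the hypercube `(Fin N → Bool)`. -/
noncomputable def srw (N : ℕ) : Matrix (Fin N → Bool) (Fin N → Bool) ℝ :=
  fun x y => if hammingDist x y = 1 then (N : ℝ)⁻¹ else 0

/-- Transitions of `P` killed upon landing in `A`. -/
noncomputable def taboo {S : Type*} [Fintype S] [DecidableEq S]
    (P : Matrix S S ℝ) (A : Finset S) : Matrix S S ℝ :=
  fun x y => if y ∈ A then 0 else P x y

/-- `hitProb P A B x = P_x(τ_A < τ_B)` (hitting times after time 0). -/
noncomputable def hitProb {S : Type*} [Fintype S] [DecidableEq S]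
    (P : Matrix S S ℝ) (A B : Finset S) (x : S) : ℝ :=
  ∑' k : ℕ, ∑ a ∈ A, ((taboo P (A ∪ B)) ^ k * P) x a

/-- Level-2 events: for the two-level chain, `σ₁ ∈ V_{N1}` fixed,
`C = C(σ₁)` the cylinder over `σ₁` with outer boundary `∂C` (states with first coordinate at
Hamming distance 1 from `σ₁`), disjoint `A, B ⊆ C` and `σ ∈ C`, setting `u = log(1-q(σ₁))`:
`P_σ(τ_A ≤ τ_{B∪∂C}) = E°_{σ₂}[e^{u·τ_{π₂A}} 1{τ_{π₂A} < τ_{π₂B}}]`,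
where the right-hand side, for the simple random walk on `V_{N2}` started at `σ₂`, is
`∑_{k≥0} e^{u(k+1)} P°_{σ₂}(τ_{π₂A} = k+1 < τ_{π₂B})` (and the case `B = ∅` is included). -/
theorem level_two_events_laplace_transform (N₁ N₂ : ℕ) (hN₁ : 1 ≤ N₁) (hN₂ : 1 ≤ N₂)
    (q : (Fin N₁ → Bool) → ℝ) (hq : ∀ a, 0 < q a ∧ q a < 1)
    (P : Matrix ((Fin N₁ → Bool) × (Fin N₂ → Bool)) ((Fin N₁ → Bool) × (Fin N₂ → Bool)) ℝ)
    (hP : ∀ σ σ', P σ σ' =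
      (if σ'.2 = σ.2 then q σ.1 * srw N₁ σ.1 σ'.1 else 0) +
      (if σ'.1 = σ.1 then (1 - q σ.1) * srw N₂ σ.2 σ'.2 else 0))
    (σ₁ : Fin N₁ → Bool)
    (C : Finset ((Fin N₁ → Bool) × (Fin N₂ → Bool)))
    (hC : C = Finset.univ.filter (fun x => x.1 = σ₁))
    (bdC : Finset ((Fin N₁ → Bool) × (Fin N₂ → Bool)))
    (hbdC : bdC = Finset.univ.filter (fun x => hammingDist x.1 σ₁ = 1))
    (A B : Finset ((Fin N₁ → Bool) × (Fin N₂ → Bool)))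
    (hA : A ⊆ C) (hB : B ⊆ C) (hAB : Disjoint A B)
    (σ : (Fin N₁ → Bool) × (Fin N₂ → Bool)) (hσ : σ ∈ C) :
    hitProb P A (B ∪ bdC) σ
      = ∑' k : ℕ, Real.exp (Real.log (1 - q σ₁) * (k + 1)) *
          ∑ a ∈ A.image Prod.snd,
            ((taboo (srw N₂) (A.image Prod.snd ∪ B.image Prod.snd)) ^ k * srw N₂) σ.2 a := by

  classical
  have hu0 : (0:ℝ) < 1 - q σ₁ := by have := (hq σ₁).2; linarith
  set u : ℝ := 1 - q σ₁ with hu_def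
  set πA := A.image Prod.snd with hπA
  set πB := B.image Prod.snd with hπB
  set M := taboo (srw N₂) (πA ∪ πB) with hM
  set Q := taboo P (A ∪ (B ∪ bdC)) with hQ
  have hσ1 : σ.1 = σ₁ := by
    rw [hC] at hσ; simpa using hσ
  have hA1 : ∀ a ∈ A, a.1 = σ₁ := by
    intro a ha; have := hA ha; rw [hC] at this; simpa using this
  have hB1 : ∀ a ∈ B, a.1 = σ₁ := by
    intro a ha; have := hB ha; rw [hC] at this; simpa using this
  have hbd : ∀ y : (Fin N₁ → Bool) × (Fin N₂ → Bool),
      y ∈ bdC ↔ hammingDist y.1 σ₁ = 1 := by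
    intro y; rw [hbdC]; simp
  have hAmem : ∀ y : (Fin N₁ → Bool) × (Fin N₂ → Bool), y.1 = σ₁ → (y.2 ∈ πA ↔ y ∈ A) := by
    intro y hy; rw [hπA]
    constructor
    · intro h
      obtain ⟨a, haA, ha2⟩ := Finset.mem_image.1 h
      have : a = y := Prod.ext (by rw [hA1 a haA, hy]) ha2
      rwa [this] at haA
    · intro h; exact Finset.mem_image_of_mem _ h
  have hBmem : ∀ y : (Fin N₁ → Bool) × (Fin N₂ → Bool), y.1 = σ₁ → (y.2 ∈ πB ↔ y ∈ B) := by
    intro y hy; rw [hπB]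
    constructor
    · intro h
      obtain ⟨a, haA, ha2⟩ := Finset.mem_image.1 h
      have : a = y := Prod.ext (by rw [hB1 a haA, hy]) ha2
      rwa [this] at haA
    · intro h; exact Finset.mem_image_of_mem _ h
  -- one-step lemma
  have step : ∀ (z₂ : Fin N₂ → Bool) (y : (Fin N₁ → Bool) × (Fin N₂ → Bool)),
      Q (σ₁, z₂) y = if y.1 = σ₁ then u * M z₂ y.2 else 0 := by
    intro z₂ y
    rw [hQ, hM]
    unfold taboo
    by_cases hy1 : y.1 = σ₁
    · simp only [hy1, if_true]
      by_cases hyAB : y ∈ A ∪ (B ∪ bdC)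
      · have hnb : y ∉ bdC := by
          rw [hbd, hy1]; simp [hammingDist_self]
        have : y ∈ A ∨ y ∈ B := by
          rcases Finset.mem_union.1 hyAB with h | h
          · exact Or.inl h
          · rcases Finset.mem_union.1 h with h | h
            · exact Or.inr h
            · exact absurd h hnb
        have hy2 : y.2 ∈ πA ∪ πB := by
          rcases this with h | h
          · exact Finset.mem_union_left _ ((hAmem y hy1).2 h)
          · exact Finset.mem_union_right _ ((hBmem y hy1).2 h)
        simp [hyAB, hy2]
      · have hy2 : y.2 ∉ πA ∪ πB := by
          intro hcon
          apply hyAB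
          rcases Finset.mem_union.1 hcon with h | h
          · exact Finset.mem_union_left _ ((hAmem y hy1).1 h)
          · exact Finset.mem_union_right _ (Finset.mem_union_left _ ((hBmem y hy1).1 h))
        rw [if_neg hyAB, if_neg hy2, hP]
        have hsrw1 : srw N₁ σ₁ σ₁ = 0 := by
          unfold srw; simp [hammingDist_self]
        simp [hy1, hsrw1, hu_def]
    · simp only [hy1, if_false]
      by_cases hyAB : y ∈ A ∪ (B ∪ bdC)
      · rw [if_pos hyAB]
      · have hnb : y ∉ bdC := fun h => hyAB (Finset.mem_union_right _ (Finset.mem_union_right _ h))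
        have hd : hammingDist y.1 σ₁ ≠ 1 := fun h => hnb ((hbd y).2 h)
        have hsrw1 : srw N₁ σ₁ y.1 = 0 := by
          unfold srw
          rw [if_neg]
          rw [hammingDist_comm]; exact hd
        rw [if_neg hyAB, hP]
        simp [hy1, hsrw1]
  -- powers
  have pow : ∀ (k : ℕ) (x₂ : Fin N₂ → Bool) (y : (Fin N₁ → Bool) × (Fin N₂ → Bool)),
      (Q ^ k) (σ₁, x₂) y = if y.1 = σ₁ then u ^ k * (M ^ k) x₂ y.2 else 0 := by
    intro k
    induction k with
    | zero =>
      intro x₂ y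
      rcases y with ⟨y1, y2⟩
      by_cases h1 : y1 = σ₁
      · subst h1
        simp [Matrix.one_apply, Prod.ext_iff]
      · simp [Matrix.one_apply, Prod.ext_iff, h1, Ne.symm h1]
    | succ k ih =>
      intro x₂ y
      rw [pow_succ, Matrix.mul_apply, Fintype.sum_prod_type]
      have hz : ∀ z₁, (∑ z₂ : Fin N₂ → Bool, (Q ^ k) (σ₁, x₂) (z₁, z₂) * Q (z₁, z₂) y)
          = if z₁ = σ₁ then ∑ z₂ : Fin N₂ → Bool, (u ^ k * (M ^ k) x₂ z₂) * Q (σ₁, z₂) y else 0 := by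
        intro z₁
        by_cases h1 : z₁ = σ₁
        · rw [if_pos h1]
          refine Finset.sum_congr rfl fun z₂ _ => ?_
          rw [h1, ih x₂ (σ₁, z₂)]; simp
        · rw [if_neg h1]
          refine Finset.sum_eq_zero fun z₂ _ => ?_
          rw [ih x₂ (z₁, z₂)]; simp [h1]
      rw [Finset.sum_congr rfl (fun z₁ _ => hz z₁), Finset.sum_ite_eq' Finset.univ σ₁]
      rw [if_pos (Finset.mem_univ _)]
      by_cases hy1 : y.1 = σ₁
      · simp only [hy1, if_true]
        have : ∀ z₂ : Fin N₂ → Bool, (u ^ k * (M ^ k) x₂ z₂) * Q (σ₁, z₂) y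
            = u ^ (k+1) * ((M ^ k) x₂ z₂ * M z₂ y.2) := by
          intro z₂; rw [step z₂ y, if_pos hy1]; ring
        rw [Finset.sum_congr rfl fun z₂ _ => this z₂, ← Finset.mul_sum,
          pow_succ M k, Matrix.mul_apply]
      · simp only [hy1, if_false]
        refine Finset.sum_eq_zero fun z₂ _ => ?_
        rw [step z₂ y, if_neg hy1, mul_zero]
  -- conclude
  unfold hitProb
  refine tsum_congr fun k => ?_
  have hexp : Real.exp (Real.log u * (k + 1)) = u ^ (k + 1) := by
    have h1 : ((k:ℝ) + 1) = ((k + 1 : ℕ) : ℝ) := by push_cast; ring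
    rw [h1, mul_comm, Real.exp_nat_mul, Real.exp_log hu0]
  have hσeq : σ = (σ₁, σ.2) := Prod.ext hσ1 rfl
  have hterm : ∀ a ∈ A, ((Q ^ k) * P) σ a = u ^ (k+1) * ((M ^ k) * srw N₂) σ.2 a.2 := by
    intro a haA
    rw [Matrix.mul_apply, hσeq]
    rw [Fintype.sum_prod_type]
    have hz : ∀ z₁, (∑ z₂ : Fin N₂ → Bool, (Q ^ k) (σ₁, σ.2) (z₁, z₂) * P (z₁, z₂) a)
        = if z₁ = σ₁ then ∑ z₂ : Fin N₂ → Bool, (u ^ k * (M ^ k) σ.2 z₂) * P (σ₁, z₂) a else 0 := by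
      intro z₁
      by_cases h1 : z₁ = σ₁
      · rw [if_pos h1]
        refine Finset.sum_congr rfl fun z₂ _ => ?_
        rw [h1, pow k σ.2 (σ₁, z₂)]; simp
      · rw [if_neg h1]
        refine Finset.sum_eq_zero fun z₂ _ => ?_
        rw [pow k σ.2 (z₁, z₂)]; simp [h1]
    rw [Finset.sum_congr rfl fun z₁ _ => hz z₁, Finset.sum_ite_eq' Finset.univ σ₁,
      if_pos (Finset.mem_univ _)]
    have hPa : ∀ z₂ : Fin N₂ → Bool, P (σ₁, z₂) a = u * srw N₂ z₂ a.2 := by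
      intro z₂
      rw [hP]
      have ha1 : a.1 = σ₁ := hA1 a haA
      have hsrw1 : srw N₁ σ₁ σ₁ = 0 := by
        unfold srw; simp [hammingDist_self]
      simp [ha1, hsrw1, hu_def]
    have : ∀ z₂ : Fin N₂ → Bool, (u ^ k * (M ^ k) σ.2 z₂) * P (σ₁, z₂) a
        = u ^ (k+1) * ((M ^ k) σ.2 z₂ * srw N₂ z₂ a.2) := by
      intro z₂; rw [hPa z₂]; ring
    rw [Finset.sum_congr rfl fun z₂ _ => this z₂, ← Finset.mul_sum,
      Matrix.mul_apply]
  rw [Finset.sum_congr rfl hterm, ← Finset.mul_sum, hexp]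
  congr 1
  rw [hπA, Finset.sum_image]
  intro a ha b hb hab
  exact Prod.ext (by rw [hA1 a ha, hA1 b hb]) hab
end

section
/- (Renewal/reversibility bound) Let J be an irreducible reversible discrete-time Markov chain on a finite state space with reversible measure G. For any states σ, η and any set W containing η with σ ∉ W: P_σ(τ_η < τ_{W∖η}) ≤ P_σ(τ_η < τ_{(W∖η)∪σ}) / P_σ(τ_W < τ_σ), and moreover P_σ(τ_η < τ_{(W∖η)∪σ}) = (G(η)/G(σ)) · P_η(τ_σ < τ_W). -/
open scoped BigOperators

/-! Splitting a path from `σ` at its first return to `σ` gives the renewal identity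
`h_W(σ,η) = h_{W∪σ}(σ,η) + h_{W∪σ}(σ,σ) · h_W(σ,η)` for the hitting distributions `h`. Returning
to `σ` and reaching `W` before `σ` are disjoint events, so `h_{W∪σ}(σ,σ) ≤ 1 - P_σ(τ_W < τ_σ)`,
and the bound follows (if `P_σ(τ_W < τ_σ) = 0`, the renewal recursion forces `h_W(σ,η) = 0`).
The identity holds path by path: by reversibility, reversing a path from `σ` to `η` multiplies
its weight by `G η / G σ`, and the reversed path avoids the same taboo set. -/

open Finset Matrix

theorem add_pow_eq_pow_add_sum {R : Type*} [Semiring R] (x y : R) (k : ℕ) :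
    (x + y) ^ k = x ^ k + ∑ j ∈ range k, x ^ j * y * (x + y) ^ (k - 1 - j) := by
  induction k with
  | zero => simp
  | succ k ih =>
    rw [pow_succ', add_mul]
    nth_rw 1 [ih]
    rw [mul_add, mul_sum, sum_range_succ', pow_succ' x k, add_assoc]
    congr 2
    · refine sum_congr rfl fun j hj => ?_
      rw [pow_succ', mul_assoc, mul_assoc, mul_assoc]
      congr 4
      omega
    · simp

section Renewal

variable {a b c : ℕ → ℝ}

theorem tsum_eq_add_tsum_mul_tsum_of_renewal (ha : ∀ k, 0 ≤ a k) (hc : ∀ k, 0 ≤ c k)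
    (hsa : Summable a) (hsc : Summable c)
    (hrec : ∀ k, a k = b k + ∑ j ∈ range k, c j * a (k - 1 - j)) :
    ∑' k, a k = ∑' k, b k + (∑' k, c k) * ∑' k, a k := by
  have hconv : HasSum (fun k => ∑ j ∈ range k, c j * a (k - 1 - j)) ((∑' k, c k) * ∑' k, a k) := by
    rw [← hasSum_nat_add_iff' 1]
    simpa using hasSum_sum_range_mul_of_summable_norm
      (hsc.congr fun k => (Real.norm_of_nonneg (hc k)).symm)
      (hsa.congr fun k => (Real.norm_of_nonneg (ha k)).symm)
  have hb : HasSum b (∑' k, a k - (∑' k, c k) * ∑' k, a k) :=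
    (hsa.hasSum.sub hconv).congr_fun fun k => by rw [hrec k]; ring
  rw [hb.tsum_eq]
  ring

theorem eq_zero_of_renewal (hb : ∀ k, b k = 0)
    (hrec : ∀ k, a k = b k + ∑ j ∈ range k, c j * a (k - 1 - j)) (k : ℕ) : a k = 0 := by
  induction k using Nat.strong_induction_on with
  | _ k ih =>
    rw [hrec, hb, zero_add]
    exact sum_eq_zero fun j hj => by rw [ih _ (by grind), mul_zero]

end Renewal

theorem isSymm_diagonal_mul_pow_mul {n R : Type*} [Fintype n] [DecidableEq n] [CommSemiring R]
    {P : Matrix n n R} {d : n → R} (hP : (diagonal d * P).IsSymm) (e : n → R) (k : ℕ) :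
    (diagonal d * ((P * diagonal e) ^ k * P)).IsSymm := by
  induction k with
  | zero => simpa using hP
  | succ k ih =>
    set M := (P * diagonal e) ^ k * P
    have hM : Mᵀ * diagonal d = diagonal d * M := by simpa [IsSymm, transpose_mul] using ih
    have hP' : Pᵀ * diagonal d = diagonal d * P := by simpa [IsSymm, transpose_mul] using hP
    unfold IsSymm
    calc (diagonal d * ((P * diagonal e) ^ (k + 1) * P))ᵀ
        = Pᵀ * diagonal e * (Mᵀ * diagonal d) := by
          simp [M, pow_succ, transpose_mul, Matrix.mul_assoc]
      _ = Pᵀ * diagonal d * diagonal e * M := by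
          have hde : diagonal e * diagonal d = diagonal d * diagonal e := by
            simp only [diagonal_mul_diagonal, mul_comm]
          rw [hM, ← Matrix.mul_assoc, Matrix.mul_assoc Pᵀ, hde]
          simp only [M, Matrix.mul_assoc]
      _ = diagonal d * ((P * diagonal e) ^ (k + 1) * P) := by
          rw [hP', pow_succ']
          simp only [M, Matrix.mul_assoc]

theorem mul_single_one_mul_apply {n R : Type*} [Fintype n] [DecidableEq n] [Semiring R]
    (M N : Matrix n n R) (i x y : n) :
    (M * (single i i 1 : Matrix n n R) * N) x y = M x i * N i y := by
  rw [Matrix.mul_assoc, mul_apply, sum_eq_single i]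
  · simp
  · intro z _ hz
    simp [hz]
  · simp

section Taboo

variable {S : Type*} [Fintype S] [DecidableEq S]

theorem taboo_eq_mul_diagonal (P : Matrix S S ℝ) (C : Finset S) :
    taboo P C = P * diagonal fun y => if y ∈ C then 0 else 1 := by
  ext x y
  rw [mul_diagonal]
  by_cases hy : y ∈ C <;> simp [taboo, hy]

theorem mul_taboo (M P : Matrix S S ℝ) (C : Finset S) : M * taboo P C = taboo (M * P) C := by
  rw [taboo_eq_mul_diagonal, taboo_eq_mul_diagonal, Matrix.mul_assoc]

theorem taboo_eq_taboo_insert_add {P : Matrix S S ℝ} {C : Finset S} {σ : S} (hσ : σ ∉ C) :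
    taboo P C = taboo P (insert σ C) + P * single σ σ 1 := by
  ext x y
  by_cases hy : y = σ
  · subst hy
    simp [taboo, hσ]
  · simp [taboo, hy]

end Taboo

section HittingDist

variable {S : Type*} [Fintype S] [DecidableEq S] {P : Matrix S S ℝ}

/-- `hittingDist P C x y = P_x(X_{τ_C} = y)` for `y ∈ C`, with `τ_C ≥ 1`. -/
noncomputable def hittingDist (P : Matrix S S ℝ) (C : Finset S) (x y : S) : ℝ :=
  ∑' k : ℕ, (taboo P C ^ k * P) x y

theorem hitProb_singleton (a : S) (B : Finset S) (x : S) :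
    hitProb P {a} B x = hittingDist P (insert a B) x a := by
  simp [hitProb, hittingDist]

theorem mul_hittingDist_comm {G : S → ℝ} (hrev : ∀ x y, G x * P x y = G y * P y x)
    (C : Finset S) (x y : S) :
    G x * hittingDist P C x y = G y * hittingDist P C y x := by
  have hsymm : (diagonal G * P).IsSymm := by
    ext x y
    simp [diagonal_mul, hrev]
  simp only [hittingDist, ← tsum_mul_left]
  refine tsum_congr fun k => ?_
  simpa [taboo_eq_mul_diagonal, diagonal_mul] using
    ((isSymm_diagonal_mul_pow_mul hsymm _ k).apply x y).symm

theorem taboo_apply_nonneg (hP : ∀ x y, 0 ≤ P x y) (C : Finset S) (x y : S) :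
    0 ≤ taboo P C x y := by
  unfold taboo
  split_ifs
  exacts [le_rfl, hP x y]

theorem taboo_pow_mul_apply_nonneg (hP : ∀ x y, 0 ≤ P x y) (C : Finset S) (k : ℕ) (x y : S) :
    0 ≤ (taboo P C ^ k * P) x y :=
  sum_nonneg fun z _ => mul_nonneg (pow_apply_nonneg (taboo_apply_nonneg hP C) k x z) (hP z y)

theorem hittingDist_nonneg (hP : ∀ x y, 0 ≤ P x y) (C : Finset S) (x y : S) :
    0 ≤ hittingDist P C x y :=
  tsum_nonneg fun k => taboo_pow_mul_apply_nonneg hP C k x y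

theorem sum_taboo_pow_mul_apply_add_sum_taboo_pow_succ (hProw : ∀ x, ∑ y, P x y = 1)
    (C : Finset S) (k : ℕ) (x : S) :
    ∑ a ∈ C, (taboo P C ^ k * P) x a + ∑ y, (taboo P C ^ (k + 1)) x y
      = ∑ y, (taboo P C ^ k) x y := by
  have hrow : ∑ y, (taboo P C ^ k * P) x y = ∑ y, (taboo P C ^ k) x y := by
    simp only [mul_apply]
    rw [sum_comm]
    simp [← mul_sum, hProw]
  have hcompl : ∑ y, taboo (taboo P C ^ k * P) C x y = ∑ y ∈ Cᶜ, (taboo P C ^ k * P) x y := by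
    rw [← sum_add_sum_compl C, sum_eq_zero fun y hy => by simp [taboo, hy], zero_add]
    exact sum_congr rfl fun y hy => by simp [taboo, mem_compl.1 hy]
  rw [pow_succ, mul_taboo, hcompl, ← hrow, sum_add_sum_compl]

theorem sum_range_sum_taboo_pow_mul_apply_le_one (hP : ∀ x y, 0 ≤ P x y)
    (hProw : ∀ x, ∑ y, P x y = 1) (C : Finset S) (x : S) (N : ℕ) :
    ∑ k ∈ range N, ∑ a ∈ C, (taboo P C ^ k * P) x a ≤ 1 := by
  rw [sum_congr rfl fun k _ =>
      eq_sub_of_add_eq (sum_taboo_pow_mul_apply_add_sum_taboo_pow_succ hProw C k x),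
    sum_range_sub']
  simpa [one_apply] using sum_nonneg fun y _ => pow_apply_nonneg (taboo_apply_nonneg hP C) N x y

theorem summable_taboo_pow_mul_apply (hP : ∀ x y, 0 ≤ P x y) (hProw : ∀ x, ∑ y, P x y = 1)
    {C : Finset S} {y : S} (hy : y ∈ C) (x : S) :
    Summable fun k => (taboo P C ^ k * P) x y :=
  (summable_of_sum_range_le (fun k => sum_nonneg fun a _ => taboo_pow_mul_apply_nonneg hP C k x a)
    (sum_range_sum_taboo_pow_mul_apply_le_one hP hProw C x)).of_nonneg_of_le
    (fun k => taboo_pow_mul_apply_nonneg hP C k x y)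
    (fun k => single_le_sum (fun a _ => taboo_pow_mul_apply_nonneg hP C k x a) hy)

theorem sum_hittingDist_le_one (hP : ∀ x y, 0 ≤ P x y) (hProw : ∀ x, ∑ y, P x y = 1)
    (C : Finset S) (x : S) :
    ∑ a ∈ C, hittingDist P C x a ≤ 1 := by
  unfold hittingDist
  rw [← Summable.tsum_finsetSum fun a ha => summable_taboo_pow_mul_apply hP hProw ha x]
  exact Real.tsum_le_of_sum_range_le
    (fun k => sum_nonneg fun a _ => taboo_pow_mul_apply_nonneg hP C k x a)
    (sum_range_sum_taboo_pow_mul_apply_le_one hP hProw C x)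

theorem hitProb_eq_sum_hittingDist (hP : ∀ x y, 0 ≤ P x y) (hProw : ∀ x, ∑ y, P x y = 1)
    (A B : Finset S) (x : S) :
    hitProb P A B x = ∑ a ∈ A, hittingDist P (A ∪ B) x a :=
  Summable.tsum_finsetSum fun _ ha => summable_taboo_pow_mul_apply hP hProw (mem_union_left B ha) x

theorem taboo_pow_mul_apply_eq_add_sum {C : Finset S} {σ : S} (hσ : σ ∉ C) (k : ℕ) (y : S) :
    (taboo P C ^ k * P) σ y = (taboo P (insert σ C) ^ k * P) σ y
      + ∑ j ∈ range k, (taboo P (insert σ C) ^ j * P) σ σ * (taboo P C ^ (k - 1 - j) * P) σ y := by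
  conv_lhs => rw [taboo_eq_taboo_insert_add hσ, add_pow_eq_pow_add_sum]
  rw [← taboo_eq_taboo_insert_add hσ, add_mul, Matrix.add_apply, sum_mul, Matrix.sum_apply]
  congr 1
  refine sum_congr rfl fun j _ => ?_
  rw [← mul_single_one_mul_apply]
  simp only [Matrix.mul_assoc]

theorem hittingDist_eq_add_mul (hP : ∀ x y, 0 ≤ P x y) (hProw : ∀ x, ∑ y, P x y = 1)
    {C : Finset S} {σ y : S} (hσ : σ ∉ C) (hy : y ∈ C) :
    hittingDist P C σ y
      = hittingDist P (insert σ C) σ y + hittingDist P (insert σ C) σ σ * hittingDist P C σ y :=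
  tsum_eq_add_tsum_mul_tsum_of_renewal (fun k => taboo_pow_mul_apply_nonneg hP C k σ y)
    (fun k => taboo_pow_mul_apply_nonneg hP _ k σ σ) (summable_taboo_pow_mul_apply hP hProw hy σ)
    (summable_taboo_pow_mul_apply hP hProw (mem_insert_self σ C) σ)
    (taboo_pow_mul_apply_eq_add_sum hσ · y)

theorem hittingDist_eq_zero_of_insert (hP : ∀ x y, 0 ≤ P x y) (hProw : ∀ x, ∑ y, P x y = 1)
    {C : Finset S} {σ y : S} (hσ : σ ∉ C) (hy : y ∈ C)
    (h : hittingDist P (insert σ C) σ y = 0) :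
    hittingDist P C σ y = 0 := by
  have hsum : HasSum (fun k => (taboo P (insert σ C) ^ k * P) σ y) (hittingDist P (insert σ C) σ y) :=
    (summable_taboo_pow_mul_apply hP hProw (mem_insert_of_mem hy) σ).hasSum
  rw [h, hasSum_zero_iff_of_nonneg fun k => taboo_pow_mul_apply_nonneg hP _ k σ y] at hsum
  unfold hittingDist
  simp [eq_zero_of_renewal (congr_fun hsum) (taboo_pow_mul_apply_eq_add_sum hσ · y)]

theorem hittingDist_le_div (hP : ∀ x y, 0 ≤ P x y) (hProw : ∀ x, ∑ y, P x y = 1)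
    {C : Finset S} {σ y : S} (hσ : σ ∉ C) (hy : y ∈ C) :
    hittingDist P C σ y
      ≤ hittingDist P (insert σ C) σ y / ∑ a ∈ C, hittingDist P (insert σ C) σ a := by
  set escape := ∑ a ∈ C, hittingDist P (insert σ C) σ a
  have hle : hittingDist P (insert σ C) σ y ≤ escape :=
    single_le_sum (fun a _ => hittingDist_nonneg hP _ σ a) hy
  have hesc : 0 ≤ escape := sum_nonneg fun a _ => hittingDist_nonneg hP _ σ a
  rcases hesc.eq_or_lt with h0 | hpos
  · rw [← h0, div_zero]
    exact (hittingDist_eq_zero_of_insert hP hProw hσ hy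
      (le_antisymm (h0 ▸ hle) (hittingDist_nonneg hP _ σ y))).le
  · rw [le_div_iff₀ hpos]
    have hmass : hittingDist P (insert σ C) σ σ + escape ≤ 1 := by
      simpa [escape, sum_insert hσ] using sum_hittingDist_le_one hP hProw (insert σ C) σ
    have hrenewal := hittingDist_eq_add_mul hP hProw hσ hy
    nlinarith [mul_nonneg (hittingDist_nonneg hP C σ y) (sub_nonneg.2 hmass)]

end HittingDist

theorem renewal_reversibility_bound_general
    {S : Type*} [Fintype S] [DecidableEq S]
    (P : Matrix S S ℝ) (G : S → ℝ)
    (hPnonneg : ∀ x y, 0 ≤ P x y) (hProw : ∀ x, ∑ y, P x y = 1)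
    (hGpos : ∀ x, 0 < G x)
    (hrev : ∀ x y, G x * P x y = G y * P y x)
    (W : Finset S) (σ η : S) (hη : η ∈ W) (hσ : σ ∉ W) :
    hitProb P {η} (W \ {η}) σ
      ≤ hitProb P {η} ((W \ {η}) ∪ {σ}) σ / hitProb P W {σ} σ ∧
    hitProb P {η} ((W \ {η}) ∪ {σ}) σ = (G η / G σ) * hitProb P {σ} W η := by
  have hW : insert η (W \ {η}) = W := by rw [sdiff_singleton_eq_erase, insert_erase hη]
  have hWσ : insert η (W \ {η} ∪ {σ}) = insert σ W := by
    rw [← insert_union, hW, union_singleton]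
  rw [hitProb_singleton, hitProb_singleton, hitProb_singleton, hW, hWσ,
    hitProb_eq_sum_hittingDist hPnonneg hProw, union_singleton]
  refine ⟨hittingDist_le_div hPnonneg hProw hσ hη, ?_⟩
  rw [div_mul_eq_mul_div, eq_div_iff (hGpos σ).ne', mul_comm, mul_hittingDist_comm hrev]

/-- Renewal/reversibility bound: for an irreducible discrete-time Markov chain
`P` on a finite state space, reversible with respect to the positive measure `G`, and states
`σ, η` with `η ∈ W`, `σ ∉ W`:
`P_σ(τ_η < τ_{W∖η}) ≤ P_σ(τ_η < τ_{(W∖η)∪σ}) / P_σ(τ_W < τ_σ)`, and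
`P_σ(τ_η < τ_{(W∖η)∪σ}) = (G(η)/G(σ)) · P_η(τ_σ < τ_W)`. -/
theorem renewal_reversibility_bound
    {S : Type*} [Fintype S] [DecidableEq S]
    (P : Matrix S S ℝ) (G : S → ℝ)
    (hPnonneg : ∀ x y, 0 ≤ P x y) (hProw : ∀ x, ∑ y, P x y = 1)
    (hGpos : ∀ x, 0 < G x)
    (hrev : ∀ x y, G x * P x y = G y * P y x)
    (hirred : ∀ x y, ∃ n : ℕ, 0 < (P ^ n) x y)
    (W : Finset S) (σ η : S) (hη : η ∈ W) (hσ : σ ∉ W) :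
    hitProb P {η} (W \ {η}) σ
      ≤ hitProb P {η} ((W \ {η}) ∪ {σ}) σ / hitProb P W {σ} σ ∧
    hitProb P {η} ((W \ {η}) ∪ {σ}) σ = (G η / G σ) * hitProb P {σ} W η :=
  renewal_reversibility_bound_general P G hPnonneg hProw hGpos hrev W σ η hη hσ
end
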